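/- Let K ≥ 0, c ≥ 0, m ∈ ℕ with m ≥ 1, and let μ : ℝ^d × ℝ^d → ℝ^d be continuously differentiable in its first argument satisfying ‖∂_x μ(x,y)‖ ≤ K(1 + ‖x‖^c) for all x,y ∈ ℝ^d and ‖μ(x,y₁) − μ(x,y₂)‖ ≤ K‖y₁−y₂‖ for all x,y₁,y₂ ∈ ℝ^d. Then for all x, y ∈ ℝ^d with max(‖x‖,‖y‖) > 1 and ‖x‖ ≤ m^{1/(2c)}, ‖y‖ ≤ m^{1/(2c)}, one has ‖μ(x,y)‖² ≤ m(15K² + 3‖μ(0,0)‖²)(‖x‖² + ‖y‖²). -/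

import Mathlib

/-!
Split `μ x y = (μ x y - μ x 0) + (μ x 0 - μ 0 0) + μ 0 0`. The first difference is at most `K ‖y‖`
by the Lipschitz bound in `y`; the second is at most `K (1 + ‖x‖^c) ‖x‖` by the mean value
inequality on the ball of radius `‖x‖`, where the Jacobian bound is monotone in the radius.
Squaring with `(u + v + w)² ≤ 3 (u² + v² + w²)`, the factor `(1 + ‖x‖^c)² ≤ 2 (1 + ‖x‖^{2c})` is at
most `4m` on the bounded event, and `max (‖x‖, ‖y‖) > 1` absorbs the constant term into
`m (‖x‖² + ‖y‖²)`.
-/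

open Metric

section GrowthBound

variable {E F : Type*} [NormedAddCommGroup E] [NormedSpace ℝ E]
  [NormedAddCommGroup F] [NormedSpace ℝ F]

theorem norm_sub_apply_zero_le_of_norm_fderiv_le_rpow {f : E → F} {K c : ℝ} (hK : 0 ≤ K)
    (hc : 0 ≤ c) (hf : Differentiable ℝ f) (hf' : ∀ z, ‖fderiv ℝ f z‖ ≤ K * (1 + ‖z‖ ^ c))
    (x : E) : ‖f x - f 0‖ ≤ K * (1 + ‖x‖ ^ c) * ‖x‖ := by
  have hball : ∀ z ∈ closedBall (0 : E) ‖x‖, ‖fderiv ℝ f z‖ ≤ K * (1 + ‖x‖ ^ c) := by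
    intro z hz
    have hz : ‖z‖ ≤ ‖x‖ := by simpa using hz
    grw [hf' z, Real.rpow_le_rpow (norm_nonneg z) hz hc]
  simpa using (convex_closedBall (0 : E) ‖x‖).norm_image_sub_le_of_norm_fderiv_le
    (fun z _ => hf z) hball (mem_closedBall_self (norm_nonneg x)) (by simp)

theorem norm_apply₂_le_of_norm_fderiv_le_rpow_of_lipschitz {μ : E → E → F} {K c : ℝ}
    (hK : 0 ≤ K) (hc : 0 ≤ c) (hdiff : ∀ y, Differentiable ℝ (fun x => μ x y))
    (hjac : ∀ x y, ‖fderiv ℝ (fun z => μ z y) x‖ ≤ K * (1 + ‖x‖ ^ c))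
    (hlip : ∀ x y₁ y₂, ‖μ x y₁ - μ x y₂‖ ≤ K * ‖y₁ - y₂‖) (x y : E) :
    ‖μ x y‖ ≤ K * (1 + ‖x‖ ^ c) * ‖x‖ + K * ‖y‖ + ‖μ 0 0‖ := by
  have hy : ‖μ x y - μ x 0‖ ≤ K * ‖y‖ := by simpa using hlip x y 0
  have hx := norm_sub_apply_zero_le_of_norm_fderiv_le_rpow hK hc (hdiff 0) (fun z => hjac z 0) x
  calc ‖μ x y‖ = ‖(μ x y - μ x 0) + (μ x 0 - μ 0 0) + μ 0 0‖ := by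
        rw [sub_add_sub_cancel, sub_add_cancel]
    _ ≤ ‖μ x y - μ x 0‖ + ‖μ x 0 - μ 0 0‖ + ‖μ 0 0‖ := norm_add₃_le
    _ ≤ K * ‖y‖ + K * (1 + ‖x‖ ^ c) * ‖x‖ + ‖μ 0 0‖ := by gcongr
    _ = K * (1 + ‖x‖ ^ c) * ‖x‖ + K * ‖y‖ + ‖μ 0 0‖ := by ring

end GrowthBound

theorem sq_add_add_le_three_mul (u v w : ℝ) : (u + v + w) ^ 2 ≤ 3 * (u ^ 2 + v ^ 2 + w ^ 2) := by
  nlinarith [sq_nonneg (u - v), sq_nonneg (u - w), sq_nonneg (v - w)]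

theorem sq_mul_one_add_mul_le {K a A m : ℝ} (ha : a ^ 2 ≤ m) (hm : 1 ≤ m) :
    (K * (1 + a) * A) ^ 2 ≤ 4 * m * K ^ 2 * A ^ 2 := by
  have h : (1 + a) ^ 2 ≤ 4 * m := by nlinarith [sq_nonneg (1 - a)]
  calc (K * (1 + a) * A) ^ 2 = (1 + a) ^ 2 * (K ^ 2 * A ^ 2) := by ring
    _ ≤ 4 * m * (K ^ 2 * A ^ 2) := by gcongr
    _ = 4 * m * K ^ 2 * A ^ 2 := by ring

theorem sq_growth_bound_le {K a A B P m : ℝ} (ha : a ^ 2 ≤ m) (hm : 1 ≤ m)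
    (hAB : 1 ≤ A ^ 2 + B ^ 2) :
    (K * (1 + a) * A + K * B + P) ^ 2 ≤ m * (15 * K ^ 2 + 3 * P ^ 2) * (A ^ 2 + B ^ 2) := by
  have hv : (K * B) ^ 2 ≤ m * K ^ 2 * B ^ 2 := by
    nlinarith [mul_nonneg (sq_nonneg K) (sq_nonneg B)]
  have hw : P ^ 2 ≤ m * P ^ 2 * (A ^ 2 + B ^ 2) := by
    have : 1 ≤ m * (A ^ 2 + B ^ 2) := by nlinarith
    nlinarith [sq_nonneg P]
  have hm0 : 0 ≤ m := by linarith
  calc (K * (1 + a) * A + K * B + P) ^ 2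
      ≤ 3 * ((K * (1 + a) * A) ^ 2 + (K * B) ^ 2 + P ^ 2) := sq_add_add_le_three_mul _ _ _
    _ ≤ 3 * (4 * m * K ^ 2 * A ^ 2 + m * K ^ 2 * B ^ 2 + m * P ^ 2 * (A ^ 2 + B ^ 2)) := by
        gcongr
        exact sq_mul_one_add_mul_le ha hm
    _ ≤ m * (15 * K ^ 2 + 3 * P ^ 2) * (A ^ 2 + B ^ 2) := by
        nlinarith [mul_nonneg (mul_nonneg hm0 (sq_nonneg K)) (sq_nonneg A),
          mul_nonneg (mul_nonneg hm0 (sq_nonneg K)) (sq_nonneg B)]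

theorem one_lt_sq_add_sq_of_one_lt_max {A B : ℝ} (hA : 0 ≤ A) (hB : 0 ≤ B)
    (h : 1 < max A B) : 1 < A ^ 2 + B ^ 2 := by
  rcases lt_max_iff.mp h with h | h <;> nlinarith

/-- Inequality (3.8): growth control of the superlinear drift on the bounded event.
The constraint `‖x‖ ≤ m^{1/(2c)}` is encoded equivalently as `‖x‖^{2c} ≤ m`
(for `c = 0` this is no constraint, matching the convention `m^{1/0} = ∞`). -/
theorem stmt2 {d : ℕ} (K c : ℝ) (hK : 0 ≤ K) (hc : 0 ≤ c) (m : ℕ) (hm : 1 ≤ m)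
    (μ : EuclideanSpace ℝ (Fin d) → EuclideanSpace ℝ (Fin d) → EuclideanSpace ℝ (Fin d))
    (hdiff : ∀ y : EuclideanSpace ℝ (Fin d), ContDiff ℝ 1 (fun x => μ x y))
    (hjac : ∀ x y : EuclideanSpace ℝ (Fin d),
      ‖fderiv ℝ (fun z => μ z y) x‖ ≤ K * (1 + ‖x‖ ^ c))
    (hlip : ∀ x y₁ y₂ : EuclideanSpace ℝ (Fin d),
      ‖μ x y₁ - μ x y₂‖ ≤ K * ‖y₁ - y₂‖) :
    ∀ x y : EuclideanSpace ℝ (Fin d), 1 < max ‖x‖ ‖y‖ →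
      ‖x‖ ^ (2 * c) ≤ (m : ℝ) → ‖y‖ ^ (2 * c) ≤ (m : ℝ) →
      ‖μ x y‖ ^ 2 ≤ (m : ℝ) * (15 * K ^ 2 + 3 * ‖μ 0 0‖ ^ 2) * (‖x‖ ^ 2 + ‖y‖ ^ 2) := by
  intro x y hmax hxm _
  have hbound := norm_apply₂_le_of_norm_fderiv_le_rpow_of_lipschitz hK hc
    (fun y => (hdiff y).differentiable one_ne_zero) hjac hlip x y
  have hxc : (‖x‖ ^ c) ^ 2 ≤ (m : ℝ) := by
    rwa [← Real.rpow_two, ← Real.rpow_mul (norm_nonneg x), mul_comm]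
  calc ‖μ x y‖ ^ 2 ≤ (K * (1 + ‖x‖ ^ c) * ‖x‖ + K * ‖y‖ + ‖μ 0 0‖) ^ 2 := by gcongr
    _ ≤ _ := sq_growth_bound_le hxc (by exact_mod_cast hm)
        (one_lt_sq_add_sq_of_one_lt_max (norm_nonneg x) (norm_nonneg y) hmax).le
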